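/- For a HyperLTL formula with a purely existential quantifier prefix, a Kripke structure K has a repair (a substructure K' with the same states, initial state, and labeling, transition relation δ' ⊆ δ, no deadlocks, satisfying φ) if and only if K itself satisfies φ. -/
import Mathlib


/-- A trace is an infinite sequence of letters over the alphabet `2^AP`. -/
abbrev PTrace (AP : Type) := ℕ → Set AP

/-- Quantifier-free HyperLTL formulas over atomic propositions `AP` and
trace variables `V`. -/
inductive QF (AP V : Type) where
  | tt : QF AP V
  | atom : AP → V → QF AP V
  | neg : QF AP V → QF AP V
  | or : QF AP V → QF AP V → QF AP V
  | until_ : QF AP V → QF AP V → QF AP V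
  | next : QF AP V → QF AP V

/-- Shift every assigned trace by `j` positions (`Π[j,∞]`). -/
def shiftA {AP V : Type} (A : V → PTrace AP) (j : ℕ) : V → PTrace AP :=
  fun π i => A π (i + j)

/-- Semantics of quantifier-free HyperLTL formulas over a trace assignment. -/
def QF.sat {AP V : Type} : QF AP V → (V → PTrace AP) → Prop
  | .tt, _ => True
  | .atom a π, A => a ∈ A π 0
  | .neg ψ, A => ¬ QF.sat ψ A
  | .or ψ₁ ψ₂, A => QF.sat ψ₁ A ∨ QF.sat ψ₂ A
  | .until_ ψ₁ ψ₂, A => ∃ i, QF.sat ψ₂ (shiftA A i) ∧ ∀ j < i, QF.sat ψ₁ (shiftA A j)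
  | .next ψ, A => QF.sat ψ (shiftA A 1)

/-- Derived Boolean/temporal operators. -/
def QF.andQ {AP V : Type} (ψ₁ ψ₂ : QF AP V) : QF AP V := .neg (.or (.neg ψ₁) (.neg ψ₂))
def QF.impQ {AP V : Type} (ψ₁ ψ₂ : QF AP V) : QF AP V := .or (.neg ψ₁) ψ₂
def QF.iffQ {AP V : Type} (ψ₁ ψ₂ : QF AP V) : QF AP V := QF.andQ (QF.impQ ψ₁ ψ₂) (QF.impQ ψ₂ ψ₁)
def QF.ev {AP V : Type} (ψ : QF AP V) : QF AP V := .until_ .tt ψ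
def QF.glob {AP V : Type} (ψ : QF AP V) : QF AP V := .neg (QF.ev (.neg ψ))

/-- HyperLTL formulas: a quantifier structure over a quantifier-free body. -/
inductive Hyper (AP V : Type) where
  | qf : QF AP V → Hyper AP V
  | ex : V → Hyper AP V → Hyper AP V
  | all : V → Hyper AP V → Hyper AP V

/-- Semantics of HyperLTL: `Hyper.sat T φ A` is `T, A ⊨ φ`. -/
def Hyper.sat {AP V : Type} [DecidableEq V] (T : Set (PTrace AP)) :
    Hyper AP V → (V → PTrace AP) → Prop
  | .qf ψ, A => QF.sat ψ A
  | .ex π φ, A => ∃ t ∈ T, Hyper.sat T φ (Function.update A π t)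
  | .all π φ, A => ∀ t ∈ T, Hyper.sat T φ (Function.update A π t)

/-- A formula has a purely universal quantifier prefix `∀π₁.…∀πₘ.ψ`. -/
inductive IsUniversal {AP V : Type} : Hyper AP V → Prop
  | qf (ψ : QF AP V) : IsUniversal (.qf ψ)
  | all (π : V) (φ : Hyper AP V) : IsUniversal φ → IsUniversal (.all π φ)

/-- A formula has a purely existential quantifier prefix `∃π₁.…∃πₘ.ψ`. -/
inductive IsExistential {AP V : Type} : Hyper AP V → Prop
  | qf (ψ : QF AP V) : IsExistential (.qf ψ)
  | ex (π : V) (φ : Hyper AP V) : IsExistential φ → IsExistential (.ex π φ)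

/-- Prefix of existential quantifiers. -/
def exPrefix {AP V : Type} : List V → Hyper AP V → Hyper AP V
  | [], φ => φ
  | π :: rest, φ => .ex π (exPrefix rest φ)

/-- Prefix of universal quantifiers. -/
def allPrefix {AP V : Type} : List V → Hyper AP V → Hyper AP V
  | [], φ => φ
  | π :: rest, φ => .all π (allPrefix rest φ)

/-- Sequentially update an assignment along a list of (variable, trace) pairs. -/
def updList {AP V : Type} [DecidableEq V] (A : V → PTrace AP) :
    List (V × PTrace AP) → (V → PTrace AP)
  | [] => A
  | (π, t) :: rest => updList (Function.update A π t) rest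

/-- Satisfaction of a (closed) formula by a set of traces: `T ⊨ φ`. -/
def SatT {AP V : Type} [DecidableEq V] (T : Set (PTrace AP)) (φ : Hyper AP V) : Prop :=
  Hyper.sat T φ (fun _ _ => (∅ : Set AP))

/-- A Kripke structure with a total transition relation. -/
structure Kripke (S AP : Type) where
  init : S
  trans : S → S → Prop
  label : S → Set AP
  total : ∀ s, ∃ s', trans s s'

/-- An infinite path of a Kripke structure starting at the initial state. -/
def KIsPath {S AP : Type} (K : Kripke S AP) (p : ℕ → S) : Prop :=
  p 0 = K.init ∧ ∀ i, K.trans (p i) (p (i + 1))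

/-- The set of traces of a Kripke structure. -/
def KTraces {S AP : Type} (K : Kripke S AP) : Set (PTrace AP) :=
  {t | ∃ p, KIsPath K p ∧ ∀ i, t i = K.label (p i)}

/-- `K ⊨ φ`. -/
def SatK {S AP V : Type} [DecidableEq V] (K : Kripke S AP) (φ : Hyper AP V) : Prop :=
  SatT (KTraces K) φ

/-- `K'` is a substructure of `K`: same states, initial state and labels,
a subset transition relation, and (by `Kripke.total`) no deadlocks. -/
structure IsRepair {S AP : Type} (K K' : Kripke S AP) : Prop where
  init_eq : K'.init = K.init
  label_eq : K'.label = K.label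
  sub : ∀ s s', K'.trans s s' → K.trans s s'

/-- A leaf: a state with a self-loop and no other outgoing transition. -/
def KIsLeaf {S AP : Type} (K : Kripke S AP) (s : S) : Prop :=
  K.trans s s ∧ ∀ s', K.trans s s' → s' = s

/-- A tree-shaped Kripke structure: every non-root state has a unique
predecessor, the root has none, and any state with a self-loop has no other
outgoing transition. -/
def KIsTree {S AP : Type} (K : Kripke S AP) : Prop :=
  (∀ s, s ≠ K.init → ∃! s', K.trans s' s) ∧
  (∀ s, ¬ K.trans s K.init) ∧
  (∀ s, K.trans s s → ∀ s', K.trans s s' → s' = s)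

/-- An acyclic Kripke structure: the only loops are self-loops on
otherwise-terminal states. -/
def KIsAcyclic {S AP : Type} (K : Kripke S AP) : Prop :=
  ∀ s, Relation.TransGen K.trans s s → (K.trans s s ∧ ∀ s', K.trans s s' → s' = s)

/-- An ultimately periodic sequence. -/
def UltPeriodic {S : Type} (p : ℕ → S) : Prop :=
  ∃ i k, 0 < k ∧ ∀ j, i ≤ j → p (j + k) = p j

lemma exist_mono {AP V : Type} [DecidableEq V] {φ : Hyper AP V} (hE : IsExistential φ)
    {T T' : Set (PTrace AP)} (hsub : T ⊆ T') :
    ∀ A, Hyper.sat T φ A → Hyper.sat T' φ A := by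
  induction hE with
  | qf ψ => intro A h; exact h
  | ex π φ _ ih =>
    rintro A ⟨t, ht, hsat⟩
    exact ⟨t, hsub ht, ih _ hsat⟩

lemma repair_traces_sub {S AP : Type} {K K' : Kripke S AP} (h : IsRepair K K') :
    KTraces K' ⊆ KTraces K := by
  rintro t ⟨p, ⟨h0, hstep⟩, hlab⟩
  exact ⟨p, ⟨h0.trans h.init_eq, fun i => h.sub _ _ (hstep i)⟩,
    fun i => (hlab i).trans (by rw [h.label_eq])⟩

/-- for purely existential formulas, a repair exists iff the
original Kripke structure satisfies the formula. -/
theorem repair_existential_iff {S AP V : Type} [DecidableEq V]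
    (K : Kripke S AP) (φ : Hyper AP V) (hE : IsExistential φ) :
    (∃ K' : Kripke S AP, IsRepair K K' ∧ SatK K' φ) ↔ SatK K φ := by
  constructor
  · rintro ⟨K', hrep, hsat⟩
    exact exist_mono hE (repair_traces_sub hrep) _ hsat
  · intro h
    exact ⟨K, ⟨rfl, rfl, fun _ _ h => h⟩, h⟩
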